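/- Let q, a, c ∈ ℂ with 0 < |q| < 1, a ≠ 0, and let k, n be integers with 1 ≤ k ≤ n. Assume 1 - c q^j ≠ 0 for 0 ≤ j ≤ n + k and 1 - (c/a) q^j ≠ 0 for 0 ≤ j ≤ k - 1. Then (1 - q^{-n})(1 - a) · (q (q;q)_k / ((1-q)(c;q)_{k+1})) · ∑_{m=0}^{n-1} (q^{1-n};q)_m (a q;q)_m (q^{k+1};q)_m q^m / ((q;q)_m (c q^{k+1};q)_m (q^2;q)_m) equals a^n · ((c/a;q)_n (q;q)_n / ((c;q)_n (c q^n;q)_k)) · ∑_{i=0}^{k} [k choose i]_q q^{C(i,2)} (-1/a)^i (c;q)_i (q^n;q)_{k-i} / ((q;q)_{n-i} (c/a;q)_i). -/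

import Mathlib

/-- The finite q-shifted factorial (a;q)_n = ∏_{j=0}^{n-1} (1 - a q^j). -/
noncomputable def qPoch (q a : ℂ) (n : ℕ) : ℂ :=
  ∏ j ∈ Finset.range n, (1 - a * q ^ j)

/-- The q-binomial coefficient [n choose k]_q = (q;q)_n / ((q;q)_k (q;q)_{n-k}). -/
noncomputable def qBinom (q : ℂ) (n k : ℕ) : ℂ :=
  qPoch q q n / (qPoch q q k * qPoch q q (n - k))

/-!
Let `δ` be the q-difference operator `(δ f)(c) = (f c - f (q c)) / c`. Both sides of the
identity are `δ^k` applied to the two sides of the q-Chu–Vandermonde identity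
`∑_{m ≤ n} (q^{-n};q)_m (a;q)_m q^m / ((q;q)_m (c;q)_m) = a^n (c/a;q)_n / (c;q)_n`.
On the left `δ` acts termwise, through `δ^j (c;q)_N⁻¹ = (q^N;q)_j / (c;q)_{N+j}`; on the right it
acts through the q-Leibniz rule `δ^k (f g)(c) = ∑_i [k choose i]_q (δ^i f)(c) (δ^{k-i} g)(q^i c)`
with `f = (c/a;q)_n` and `g = (c;q)_n⁻¹`. The q-Chu–Vandermonde identity itself follows by
induction on `n` from a telescoping certificate. Cancelling the factor `c` in `c · δ f = f - f(q ·)`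
only gives the identity for `c ≠ 0`; both sides are continuous at `c = 0`.
-/

open Finset Filter Topology

section qPoch

variable (q : ℂ)

@[simp]
lemma qPoch_zero (x : ℂ) : qPoch q x 0 = 1 := by simp [qPoch]

@[simp]
lemma qPoch_zero_left (n : ℕ) : qPoch q 0 n = 1 := by simp [qPoch]

lemma qPoch_succ (x : ℂ) (n : ℕ) : qPoch q x (n + 1) = qPoch q x n * (1 - x * q ^ n) :=
  prod_range_succ _ n

lemma qPoch_succ' (x : ℂ) (n : ℕ) : qPoch q x (n + 1) = (1 - x) * qPoch q (x * q) n := by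
  simp only [qPoch, prod_range_succ', pow_succ', pow_zero, mul_one, mul_assoc]
  exact mul_comm _ _

lemma qPoch_add (x : ℂ) (m n : ℕ) :
    qPoch q x (m + n) = qPoch q x m * qPoch q (x * q ^ m) n := by
  simp only [qPoch, prod_range_add, mul_assoc, ← pow_add]

@[fun_prop]
lemma continuous_qPoch (n : ℕ) : Continuous fun x => qPoch q x n := by
  unfold qPoch
  fun_prop

variable {q}

lemma qPoch_ne_zero {x : ℂ} {n : ℕ} : qPoch q x n ≠ 0 ↔ ∀ t < n, 1 - x * q ^ t ≠ 0 := by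
  simp [qPoch, prod_ne_zero_iff]

lemma qPoch_ne_zero_of_le {x : ℂ} {m n : ℕ} (hmn : m ≤ n) (h : qPoch q x n ≠ 0) :
    qPoch q x m ≠ 0 :=
  qPoch_ne_zero.2 fun t ht => qPoch_ne_zero.1 h t (by omega)

lemma qPoch_pow_mul_ne_zero {x : ℂ} {i m : ℕ} (h : qPoch q x (i + m) ≠ 0) :
    qPoch q (q ^ i * x) m ≠ 0 := by
  rw [qPoch_add, mul_comm x] at h
  exact right_ne_zero_of_mul h

lemma qPoch_mul_q_eq_div {x : ℂ} {n : ℕ} (hx : 1 - x ≠ 0) :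
    qPoch q (x * q) n = qPoch q x n * (1 - x * q ^ n) / (1 - x) := by
  rw [eq_div_iff hx, ← qPoch_succ, qPoch_succ', mul_comm]

lemma qPoch_inv_pow_eq_zero (hq : q ≠ 0) {n m : ℕ} (h : n < m) : qPoch q (q ^ n)⁻¹ m = 0 :=
  prod_eq_zero (mem_range.2 h) (by rw [inv_mul_cancel₀ (pow_ne_zero n hq), sub_self])

lemma qPoch_self_ne_zero_of_norm_lt_one (hq : ‖q‖ < 1) (n : ℕ) : qPoch q q n ≠ 0 :=
  qPoch_ne_zero.2 fun t _ h => hq.ne <|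
    Complex.norm_eq_one_of_pow_eq_one (by rw [pow_succ']; linear_combination -h) t.succ_ne_zero

end qPoch

section qBinom

variable {q : ℂ}

lemma qBinom_zero_right {k : ℕ} (hq : qPoch q q k ≠ 0) : qBinom q k 0 = 1 := by
  simp [qBinom, hq]

lemma qBinom_self {k : ℕ} (hq : qPoch q q k ≠ 0) : qBinom q k k = 1 := by
  simp [qBinom, hq]

lemma qBinom_succ_succ {k i : ℕ} (hik : i < k) (hq : qPoch q q (k + 1) ≠ 0) :
    qBinom q (k + 1) (i + 1) = q ^ (i + 1) * qBinom q k (i + 1) + qBinom q k i := by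
  obtain ⟨d, rfl⟩ := Nat.exists_eq_add_of_lt hik
  have hqi : 1 - q * q ^ i ≠ 0 := qPoch_ne_zero.1 hq i (by omega)
  have hqd : 1 - q * q ^ d ≠ 0 := qPoch_ne_zero.1 hq d (by omega)
  simp only [qBinom, show i + d + 1 + 1 - (i + 1) = d + 1 by omega,
    show i + d + 1 - (i + 1) = d by omega, show i + d + 1 - i = d + 1 by omega,
    qPoch_succ q q (i + d + 1), qPoch_succ q q i, qPoch_succ q q d]
  field_simp
  ring

end qBinom

section qDeriv

noncomputable def qLeibnizSum (q : ℂ) (f g : ℕ → ℂ → ℂ) (k : ℕ) (x : ℂ) : ℂ :=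
  ∑ i ∈ range (k + 1), qBinom q k i * f i x * g (k - i) (q ^ i * x)

noncomputable def invQPochDeriv (q : ℂ) (N j : ℕ) (x : ℂ) : ℂ :=
  qPoch q (q ^ N) j / qPoch q x (N + j)

/-- `δ^i` applied to `c ↦ (c/a;q)_n`, for `i ≤ n`. -/
noncomputable def qPochDeriv (q a : ℂ) (n i : ℕ) (c : ℂ) : ℂ :=
  (-(1 / a)) ^ i * q ^ i.choose 2 * (qPoch q q n / qPoch q q (n - i)) *
    qPoch q (q ^ i * c / a) (n - i)

variable {q : ℂ}

lemma qLeibnizSum_sub {f g : ℕ → ℂ → ℂ} {k : ℕ} {x : ℂ} (hq : qPoch q q (k + 1) ≠ 0)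
    (hf : ∀ i ≤ k, f i x - f i (q * x) = x * f (i + 1) x)
    (hg : ∀ i ≤ k, g (k - i) (q ^ i * x) - g (k - i) (q * (q ^ i * x)) =
      q ^ i * x * g (k - i + 1) (q ^ i * x)) :
    qLeibnizSum q f g k x - qLeibnizSum q f g k (q * x) = x * qLeibnizSum q f g (k + 1) x := by
  set F : ℕ → ℂ := fun i => q ^ i * qBinom q k i * f i x * g (k + 1 - i) (q ^ i * x)
  set G : ℕ → ℂ := fun i => qBinom q k i * f (i + 1) x * g (k - i) (q ^ (i + 1) * x)
  set H : ℕ → ℂ := fun i => qBinom q (k + 1) i * f i x * g (k + 1 - i) (q ^ i * x)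
  have hterm : ∀ i ∈ range (k + 1), qBinom q k i * f i x * g (k - i) (q ^ i * x) -
      qBinom q k i * f i (q * x) * g (k - i) (q ^ i * (q * x)) = x * (F i + G i) := by
    intro i hi
    have hi : i ≤ k := Nat.lt_succ_iff.1 (mem_range.1 hi)
    simp only [F, G, show k + 1 - i = k - i + 1 by omega,
      show q ^ (i + 1) * x = q * (q ^ i * x) by ring,
      show q ^ i * (q * x) = q * (q ^ i * x) by ring]
    linear_combination qBinom q k i * g (k - i) (q * (q ^ i * x)) * hf i hi +
      qBinom q k i * f i x * hg i hi
  have hk : qPoch q q k ≠ 0 := qPoch_ne_zero_of_le k.le_succ hq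
  have hH0 : H 0 = F 0 := by simp [F, H, qBinom_zero_right hq, qBinom_zero_right hk]
  have hHk : H (k + 1) = G k := by simp [G, H, qBinom_self hq, qBinom_self hk]
  have hHmid : ∀ i ∈ range k, H (i + 1) = F (i + 1) + G i := by
    intro i hi
    simp only [F, G, H, qBinom_succ_succ (mem_range.1 hi) hq,
      show k + 1 - (i + 1) = k - i by omega]
    ring
  rw [qLeibnizSum, qLeibnizSum, qLeibnizSum, ← sum_sub_distrib, sum_congr rfl hterm, ← mul_sum,
    sum_add_distrib, sum_range_succ' F, sum_range_succ G, sum_range_succ' H, sum_range_succ _ k,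
    sum_congr rfl hHmid, sum_add_distrib, hH0, hHk]
  ring

lemma invQPochDeriv_sub (N j : ℕ) {x : ℂ} (hx : qPoch q x (N + j + 1) ≠ 0) :
    invQPochDeriv q N j x - invQPochDeriv q N j (q * x) = x * invQPochDeriv q N (j + 1) x := by
  have hA := qPoch_succ q x (N + j)
  have hB := qPoch_succ' q x (N + j)
  have hA0 : qPoch q x (N + j) ≠ 0 := by rw [hA] at hx; exact left_ne_zero_of_mul hx
  have hB0 : qPoch q (x * q) (N + j) ≠ 0 := by rw [hB] at hx; exact right_ne_zero_of_mul hx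
  rw [invQPochDeriv, invQPochDeriv, invQPochDeriv, ← add_assoc, qPoch_succ q (q ^ N),
    mul_comm q x, div_sub_div _ _ hA0 hB0, mul_div_assoc',
    div_eq_div_iff (mul_ne_zero hA0 hB0) hx]
  linear_combination (qPoch q (q ^ N) j * qPoch q (x * q) (N + j)) * hA -
    (qPoch q x (N + j) * qPoch q (q ^ N) j) * hB

lemma qPochDeriv_sub {a : ℂ} {n i : ℕ} (hi : i < n) (hq : qPoch q q (n - i) ≠ 0) (c : ℂ) :
    qPochDeriv q a n i c - qPochDeriv q a n i (q * c) = c * qPochDeriv q a n (i + 1) c := by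
  obtain ⟨s, hs⟩ : ∃ s, n - i = s + 1 := ⟨n - i - 1, by omega⟩
  rw [hs] at hq
  have hqs : 1 - q * q ^ s ≠ 0 := qPoch_ne_zero.1 hq s s.lt_succ_self
  have hch : (i + 1).choose 2 = i.choose 2 + i := by
    rw [Nat.choose_succ_succ, Nat.choose_one_right, add_comm]
  rw [qPochDeriv, qPochDeriv, qPochDeriv, hs, show n - (i + 1) = s by omega, hch,
    show q ^ i * (q * c) / a = q ^ i * c / a * q by ring,
    show q ^ (i + 1) * c / a = q ^ i * c / a * q by ring,
    qPoch_succ' q (q ^ i * c / a), qPoch_succ q (q ^ i * c / a * q), qPoch_succ q q s]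
  field_simp
  ring

end qDeriv

section qChuVandermonde

noncomputable def chuTerm (q a b : ℂ) (m : ℕ) : ℂ :=
  qPoch q b m * qPoch q a m * q ^ m / qPoch q q m

/-- With `b = q^{-(n+1)}` its differences telescope the contiguous relation
`(1 - c) φ_{n+1}(c) = (a - c) φ_n(q c)` between the q-Chu–Vandermonde sums `φ_n`. -/
noncomputable def chuCert (q a b c : ℂ) (m : ℕ) : ℂ :=
  (1 - c) * (q ^ m - 1) * qPoch q b m * qPoch q a m / ((1 - b) * qPoch q q m * qPoch q c m)

variable {q a : ℂ}

lemma chuTerm_sub_eq_chuCert_sub {b c : ℂ} {m : ℕ} (hb : 1 - b ≠ 0)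
    (hq : qPoch q q (m + 1) ≠ 0) (hc : qPoch q c (m + 1) ≠ 0) :
    (1 - c) * (chuTerm q a b m / qPoch q c m) -
        (a - c) * (chuTerm q a (b * q) m / qPoch q (c * q) m) =
      chuCert q a b c m - chuCert q a b c (m + 1) := by
  have hc0 : 1 - c ≠ 0 := by simpa using qPoch_ne_zero.1 hc 0 (by omega)
  have hqq : 1 - q ^ m * q ≠ 0 := by simpa [mul_comm] using qPoch_ne_zero.1 hq m (by omega)
  have hcq : 1 - c * q ^ m ≠ 0 := qPoch_ne_zero.1 hc m (by omega)
  rw [chuTerm, chuTerm, chuCert, chuCert, qPoch_mul_q_eq_div hb, qPoch_mul_q_eq_div hc0,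
    qPoch_succ q b, qPoch_succ q a, qPoch_succ q q, qPoch_succ q c,
    show q ^ (m + 1) - 1 = -(1 - q * q ^ m) by ring]
  field_simp
  ring

theorem qChuVandermonde (hq0 : q ≠ 0) (ha : a ≠ 0) (n : ℕ) {c : ℂ}
    (hq : qPoch q q (n + 1) ≠ 0) (hc : qPoch q c (n + 1) ≠ 0) :
    ∑ m ∈ range (n + 1), chuTerm q a (q ^ n)⁻¹ m / qPoch q c m =
      a ^ n * qPoch q (c / a) n / qPoch q c n := by
  induction n generalizing c with
  | zero => simp [chuTerm]
  | succ n ih =>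
    have hbq : (q ^ (n + 1))⁻¹ * q = (q ^ n)⁻¹ := by
      rw [pow_succ, mul_inv, mul_assoc, inv_mul_cancel₀ hq0, mul_one]
    have hb : 1 - (q ^ (n + 1))⁻¹ ≠ 0 := by
      rw [sub_ne_zero, ne_comm, inv_ne_one, ne_comm, ← sub_ne_zero, pow_succ']
      exact qPoch_ne_zero.1 hq n (by omega)
    have hc0 : 1 - c ≠ 0 := by simpa using qPoch_ne_zero.1 hc 0 (by omega)
    have hcq : qPoch q (c * q) (n + 1) ≠ 0 := by
      rw [qPoch_succ'] at hc
      exact right_ne_zero_of_mul hc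
    have htop : chuTerm q a (q ^ n)⁻¹ (n + 1) = 0 := by
      rw [chuTerm, qPoch_inv_pow_eq_zero hq0 n.lt_succ_self, zero_mul, zero_mul, zero_div]
    have hW0 : chuCert q a (q ^ (n + 1))⁻¹ c 0 = 0 := by simp [chuCert]
    have hWtop : chuCert q a (q ^ (n + 1))⁻¹ c (n + 2) = 0 := by
      simp [chuCert, qPoch_inv_pow_eq_zero hq0 (by omega : n + 1 < n + 2)]
    have hrec : (1 - c) * ∑ m ∈ range (n + 1 + 1), chuTerm q a (q ^ (n + 1))⁻¹ m / qPoch q c m =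
        (a - c) * ∑ m ∈ range (n + 1), chuTerm q a (q ^ n)⁻¹ m / qPoch q (c * q) m := by
      have htele := sum_range_sub' (chuCert q a (q ^ (n + 1))⁻¹ c) (n + 2)
      rw [hW0, hWtop, ← sum_congr rfl fun m hm => chuTerm_sub_eq_chuCert_sub hb
          (qPoch_ne_zero_of_le (by simp at hm; omega) hq)
          (qPoch_ne_zero_of_le (by simp at hm; omega) hc),
        sum_sub_distrib, ← mul_sum, ← mul_sum, hbq,
        sum_range_succ (fun m => chuTerm q a (q ^ n)⁻¹ m / qPoch q (c * q) m) (n + 1), htop,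
        zero_div, add_zero] at htele
      linear_combination htele
    rw [ih (qPoch_ne_zero_of_le n.succ.le_succ hq) hcq, mul_comm, ← eq_div_iff hc0] at hrec
    rw [hrec, qPoch_succ' q (c / a), qPoch_succ' q c, show c / a * q = c * q / a by ring]
    field_simp
    ring

end qChuVandermonde

section chuDeriv

noncomputable def chuSumDeriv (q a : ℂ) (n k : ℕ) (c : ℂ) : ℂ :=
  ∑ m ∈ range (n + 1), chuTerm q a (q ^ n)⁻¹ m * invQPochDeriv q m k c

noncomputable def chuProdDeriv (q a : ℂ) (n k : ℕ) (c : ℂ) : ℂ :=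
  a ^ n * qLeibnizSum q (qPochDeriv q a n) (invQPochDeriv q n) k c

variable {q a : ℂ}

lemma chuSumDeriv_zero (n : ℕ) (c : ℂ) :
    chuSumDeriv q a n 0 c = ∑ m ∈ range (n + 1), chuTerm q a (q ^ n)⁻¹ m / qPoch q c m := by
  simp [chuSumDeriv, invQPochDeriv, div_eq_mul_inv]

lemma chuProdDeriv_zero {n : ℕ} (hq : qPoch q q n ≠ 0) (c : ℂ) :
    chuProdDeriv q a n 0 c = a ^ n * qPoch q (c / a) n / qPoch q c n := by
  simp [chuProdDeriv, qLeibnizSum, qPochDeriv, invQPochDeriv, qBinom, hq, div_eq_mul_inv,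
    mul_assoc]

lemma chuSumDeriv_sub {n k : ℕ} {c : ℂ} (hc : qPoch q c (n + k + 1) ≠ 0) :
    chuSumDeriv q a n k c - chuSumDeriv q a n k (q * c) = c * chuSumDeriv q a n (k + 1) c := by
  simp only [chuSumDeriv, ← sum_sub_distrib, mul_sum, ← mul_sub]
  refine sum_congr rfl fun m hm => ?_
  rw [invQPochDeriv_sub m k (qPoch_ne_zero_of_le (by simp at hm; omega) hc)]
  ring

lemma chuProdDeriv_sub {n k : ℕ} (hkn : k < n) (hq : qPoch q q n ≠ 0) {c : ℂ}
    (hc : qPoch q c (n + k + 1) ≠ 0) :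
    chuProdDeriv q a n k c - chuProdDeriv q a n k (q * c) = c * chuProdDeriv q a n (k + 1) c := by
  rw [chuProdDeriv, chuProdDeriv, chuProdDeriv, ← mul_sub, mul_left_comm]
  congr 1
  refine qLeibnizSum_sub (qPoch_ne_zero_of_le hkn hq)
    (fun i hi => qPochDeriv_sub (by omega) (qPoch_ne_zero_of_le (by omega) hq) c)
    (fun i hi => ?_)
  rw [invQPochDeriv_sub n (k - i) (qPoch_pow_mul_ne_zero ?_)]
  rwa [show i + (n + (k - i) + 1) = n + k + 1 by omega]

lemma chuSumDeriv_eq_chuProdDeriv_of_ne_zero (hq0 : q ≠ 0) (ha : a ≠ 0) {n : ℕ}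
    (hq : qPoch q q (n + 1) ≠ 0) {k : ℕ} (hkn : k ≤ n) {c : ℂ} (hc0 : c ≠ 0)
    (hc : qPoch q c (n + k + 1) ≠ 0) :
    chuSumDeriv q a n k c = chuProdDeriv q a n k c := by
  induction k generalizing c with
  | zero =>
    rw [chuSumDeriv_zero, chuProdDeriv_zero (qPoch_ne_zero_of_le n.le_succ hq)]
    exact qChuVandermonde hq0 ha n hq hc
  | succ k ih =>
    rw [← add_assoc] at hc
    have hc' : qPoch q c (n + k + 1) ≠ 0 := qPoch_ne_zero_of_le (by omega) hc
    have hqc : qPoch q (q * c) (n + k + 1) ≠ 0 := by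
      simpa using qPoch_pow_mul_ne_zero (i := 1) (by rwa [add_comm 1])
    refine mul_left_cancel₀ hc0 ?_
    rw [← chuSumDeriv_sub hc', ← chuProdDeriv_sub (by omega) (qPoch_ne_zero_of_le n.le_succ hq) hc',
      ih (by omega) hc0 hc', ih (by omega) (mul_ne_zero hq0 hc0) hqc]

lemma continuousAt_chuSumDeriv_zero (n k : ℕ) : ContinuousAt (chuSumDeriv q a n k) 0 := by
  unfold chuSumDeriv invQPochDeriv
  fun_prop (disch := simp)

lemma continuousAt_chuProdDeriv_zero (n k : ℕ) : ContinuousAt (chuProdDeriv q a n k) 0 := by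
  unfold chuProdDeriv qLeibnizSum invQPochDeriv qPochDeriv
  fun_prop (disch := simp)

lemma chuSumDeriv_eq_chuProdDeriv (hq0 : q ≠ 0) (ha : a ≠ 0) {n : ℕ}
    (hq : qPoch q q (n + 1) ≠ 0) {k : ℕ} (hkn : k ≤ n) {c : ℂ}
    (hc : qPoch q c (n + k + 1) ≠ 0) :
    chuSumDeriv q a n k c = chuProdDeriv q a n k c := by
  rcases eq_or_ne c 0 with rfl | hc0
  · have hev : chuSumDeriv q a n k =ᶠ[𝓝[≠] 0] chuProdDeriv q a n k := by
      have hne : ∀ᶠ x in 𝓝 (0 : ℂ), qPoch q x (n + k + 1) ≠ 0 :=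
        (continuous_qPoch q _).continuousAt.eventually_ne (by simp)
      filter_upwards [nhdsWithin_le_nhds hne, self_mem_nhdsWithin] with x hx hx0
      exact chuSumDeriv_eq_chuProdDeriv_of_ne_zero hq0 ha hq hkn hx0 hx
    exact (((continuousAt_chuSumDeriv_zero n k).eventuallyEq_nhds_iff_eventuallyEq_nhdsNE
      (continuousAt_chuProdDeriv_zero n k)).1 hev).eq_of_nhds
  · exact chuSumDeriv_eq_chuProdDeriv_of_ne_zero hq0 ha hq hkn hc0 hc

lemma chuSumDeriv_eq_threePhiTwo (hq0 : q ≠ 0) {n k : ℕ} (hk : 1 ≤ k)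
    (hq : qPoch q q n ≠ 0) {c : ℂ} (hc : qPoch q c (n + k) ≠ 0) :
    chuSumDeriv q a n k c =
      (1 - q ^ (-(n : ℤ))) * (1 - a) *
        (q * qPoch q q k / ((1 - q) * qPoch q c (k + 1))) *
        ∑ m ∈ Finset.range n,
          qPoch q (q ^ ((1 : ℤ) - (n : ℤ))) m * qPoch q (a * q) m *
            qPoch q (q ^ (k + 1)) m * q ^ m /
            (qPoch q q m * qPoch q (c * q ^ (k + 1)) m * qPoch q (q ^ 2) m) := by
  have hw0 : invQPochDeriv q 0 k c = 0 := by
    obtain ⟨k, rfl⟩ := Nat.exists_eq_add_of_le' hk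
    simp [invQPochDeriv, qPoch_succ']
  rw [zpow_neg, zpow_natCast, zpow_sub₀ hq0, zpow_one, zpow_natCast, div_eq_mul_inv, mul_comm q,
    chuSumDeriv, sum_range_succ', hw0, mul_zero, add_zero, mul_sum]
  refine sum_congr rfl fun m hm => ?_
  have hm : m < n := mem_range.1 hm
  have hqm : qPoch q q m ≠ 0 := qPoch_ne_zero_of_le hm.le hq
  have hq2 : qPoch q (q ^ 2) m ≠ 0 := by
    have := qPoch_ne_zero_of_le (by omega : m + 1 ≤ n) hq
    rw [qPoch_succ', ← sq] at this
    exact right_ne_zero_of_mul this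
  have hckm : qPoch q (c * q ^ (k + 1)) m ≠ 0 := by
    have := qPoch_ne_zero_of_le (by omega : k + 1 + m ≤ n + k) hc
    rw [qPoch_add] at this
    exact right_ne_zero_of_mul this
  have hqk : qPoch q (q ^ (m + 1)) k = qPoch q q k * qPoch q (q ^ (k + 1)) m / qPoch q q m := by
    rw [eq_div_iff hqm, pow_succ', pow_succ', mul_comm, ← qPoch_add, ← qPoch_add, add_comm]
  rw [chuTerm, invQPochDeriv, hqk, qPoch_succ' q (q ^ n)⁻¹, qPoch_succ' q a, qPoch_succ' q q,
    show m + 1 + k = k + 1 + m by omega, qPoch_add q c (k + 1), ← sq]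
  field_simp
  ring

lemma chuProdDeriv_eq_sum {n k : ℕ} (hkn : k ≤ n) (hq : qPoch q q n ≠ 0) {c : ℂ}
    (hc : qPoch q c (n + k) ≠ 0) (hca : qPoch q (c / a) k ≠ 0) :
    chuProdDeriv q a n k c =
      a ^ n *
        (qPoch q (c / a) n * qPoch q q n / (qPoch q c n * qPoch q (c * q ^ n) k)) *
        ∑ i ∈ Finset.range (k + 1),
          qBinom q k i * q ^ (i.choose 2) * (-(1 / a)) ^ i *
            (qPoch q c i * qPoch q (q ^ n) (k - i)) /
            (qPoch q q (n - i) * qPoch q (c / a) i) := by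
  rw [chuProdDeriv, qLeibnizSum, mul_assoc]
  congr 1
  rw [mul_sum]
  refine sum_congr rfl fun i hi => ?_
  have hik : i ≤ k := Nat.lt_succ_iff.1 (mem_range.1 hi)
  have hcai : qPoch q (c / a) i ≠ 0 := qPoch_ne_zero_of_le hik hca
  have hci : qPoch q c i ≠ 0 := qPoch_ne_zero_of_le (by omega) hc
  have hcnk : qPoch q (c * q ^ n) k ≠ 0 := by
    rw [qPoch_add] at hc; exact right_ne_zero_of_mul hc
  have hca_split : qPoch q (q ^ i * c / a) (n - i) = qPoch q (c / a) n / qPoch q (c / a) i := by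
    rw [eq_div_iff hcai, mul_comm, show q ^ i * c / a = c / a * q ^ i by ring, ← qPoch_add,
      Nat.add_sub_cancel' (by omega)]
  have hc_split : qPoch q (q ^ i * c) (n + k - i) =
      qPoch q c n * qPoch q (c * q ^ n) k / qPoch q c i := by
    rw [eq_div_iff hci, mul_comm, mul_comm (q ^ i), ← qPoch_add, ← qPoch_add,
      Nat.add_sub_cancel' (by omega)]
  rw [qPochDeriv, invQPochDeriv, show n + (k - i) = n + k - i by omega, hca_split, hc_split]
  field_simp

end chuDeriv

theorem stmt16 (q a c : ℂ) (k n : ℕ)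
    (hq0 : 0 < ‖q‖) (hq1 : ‖q‖ < 1)
    (ha : a ≠ 0) (hk : 1 ≤ k) (hkn : k ≤ n)
    (hc : ∀ j : ℕ, j ≤ n + k → 1 - c * q ^ j ≠ 0)
    (hca : ∀ j : ℕ, j < k → 1 - c / a * q ^ j ≠ 0) :
    (1 - q ^ (-(n : ℤ))) * (1 - a) *
        (q * qPoch q q k / ((1 - q) * qPoch q c (k + 1))) *
        ∑ m ∈ Finset.range n,
          qPoch q (q ^ ((1 : ℤ) - (n : ℤ))) m * qPoch q (a * q) m *
            qPoch q (q ^ (k + 1)) m * q ^ m /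
            (qPoch q q m * qPoch q (c * q ^ (k + 1)) m * qPoch q (q ^ 2) m) =
      a ^ n *
        (qPoch q (c / a) n * qPoch q q n / (qPoch q c n * qPoch q (c * q ^ n) k)) *
        ∑ i ∈ Finset.range (k + 1),
          qBinom q k i * q ^ (i.choose 2) * (-(1 / a)) ^ i *
            (qPoch q c i * qPoch q (q ^ n) (k - i)) /
            (qPoch q q (n - i) * qPoch q (c / a) i) := by
  have hqne : q ≠ 0 := norm_pos_iff.1 hq0
  have hqq := qPoch_self_ne_zero_of_norm_lt_one hq1
  have hcPoch : qPoch q c (n + k + 1) ≠ 0 := qPoch_ne_zero.2 fun t ht => hc t (by omega)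
  have hcPoch' : qPoch q c (n + k) ≠ 0 := qPoch_ne_zero_of_le (by omega) hcPoch
  rw [← chuSumDeriv_eq_threePhiTwo hqne hk (hqq n) hcPoch',
    chuSumDeriv_eq_chuProdDeriv hqne ha (hqq _) hkn hcPoch,
    chuProdDeriv_eq_sum hkn (hqq n) hcPoch' (qPoch_ne_zero.2 hca)]
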